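/- Let A = (Q, E, s, F) be a Wheeler r-GNFA, let ≤ be a Wheeler order on A, and let α ∈ Σ* with α ≠ ε. For 0 < k < min{r+1, |α|}, let f_k = out(Q[1, |G^≺(p(α, |α|−k))|], s(α, k)). Let j* be the largest integer 0 ≤ j ≤ |Q| such that: (i) in(Q[1, j], s(α, k)) ≤ f_k for every 0 < k < min{r+1, |α|}; and (ii) ρ ≺ α for every ρ ∈ Σ^k ∩ λ(Q[h]), for every 1 ≤ h ≤ j and every 0 < k < r+1. Then |G^≺(α)| ≤ j*. -/

import Mathlib

/-!
Since every state is reachable, every `I_u` is nonempty, so Axiom 1 makes `G^≺(α)` a down-set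
of the Wheeler order, i.e. `G^≺(α) = Q[1, |G^≺(α)|]`. By maximality of `j*` it therefore
suffices that `j = |G^≺(α)|` satisfies (i) and (ii). For (i), the source of an edge labelled
`s(α, k)` entering `G^≺(α)` lies in `G^≺(p(α, |α| - k))`, because `≺` cancels a common suffix;
for (ii), a label entering `u` is a suffix of a string of `I_u`, and suffixes are `≼`-smaller.
-/

/-- Strict co-lexicographic order: `α ≺ β` iff `α.reverse` is lexicographically
smaller than `β.reverse`. The empty string is the minimum. -/
def ColexLt {σ : Type*} [LinearOrder σ] (α β : List σ) : Prop :=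
  List.Lex (· < ·) α.reverse β.reverse

/-- Non-strict co-lexicographic order `α ≼ β`. -/
def ColexLe {σ : Type*} [LinearOrder σ] (α β : List σ) : Prop :=
  ColexLt α β ∨ α = β

/-- `α` is a strict suffix of `β`. -/
def IsStrictSuffix {σ : Type*} (α β : List σ) : Prop :=
  α <:+ β ∧ α ≠ β

/-- `p(α, k)`: the prefix of `α` of length `k`. -/
def pref {σ : Type*} (α : List σ) (k : ℕ) : List σ := α.take k

/-- `s(α, k)`: the suffix of `α` of length `k`. -/
def suff {σ : Type*} (α : List σ) (k : ℕ) : List σ := α.drop (α.length - k)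

/-- The 1-based rank of a state in a finite linear order: `rankQ u = i` means
`u = Q[i]` in the enumeration `Q[1] < Q[2] < ⋯ < Q[|Q|]`. -/
noncomputable def rankQ {Q : Type*} [Fintype Q] [LinearOrder Q] (u : Q) : ℕ :=
  {v : Q | v ≤ u}.ncard

/-- `Q[i, j] = {Q[i], …, Q[j]}` (empty if `i > j`). -/
def Qiv (Q : Type*) [Fintype Q] [LinearOrder Q] (i j : ℕ) : Set Q :=
  {u | i ≤ rankQ u ∧ rankQ u ≤ j}

/-- A generalized nondeterministic finite automaton: a finite set of
string-labeled edges `E ⊆ Q × Q × Σ*`, an initial state `s`, final states `F`. -/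
structure GNFA (σ Q : Type*) where
  E : Finset (Q × Q × List σ)
  s : Q
  F : Finset Q

namespace GNFA

variable {σ Q : Type*}

/-- `I A u β` means `β ∈ I_u`: `β` is obtained by concatenating the edge labels
along some path from `s` to `u` (in particular `ε ∈ I_s`). -/
inductive I (A : GNFA σ Q) : Q → List σ → Prop
  | base : I A A.s []
  | step {u v : Q} {α ρ : List σ} : I A u α → (u, v, ρ) ∈ A.E → I A v (α ++ ρ)

/-- Reachability along edges. -/
def Reach (A : GNFA σ Q) : Q → Q → Prop :=
  Relation.ReflTransGen (fun x y => ∃ ρ, (x, y, ρ) ∈ A.E)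

/-- Every state is reachable from the initial state and is co-reachable
(final or allows reaching a final state). -/
def Standard (A : GNFA σ Q) : Prop :=
  (∀ u, A.Reach A.s u) ∧ ∀ u, ∃ f ∈ A.F, A.Reach u f

/-- An ε-walk from `u` to `v`: a (possibly empty) sequence of ε-labeled edges. -/
def EpsWalk (A : GNFA σ Q) : Q → Q → Prop :=
  Relation.ReflTransGen (fun x y => (x, y, ([] : List σ)) ∈ A.E)

/-- An `r`-GNFA: all edge labels have length at most `r`. -/
def Bounded (A : GNFA σ Q) (r : ℕ) : Prop := ∀ e ∈ A.E, e.2.2.length ≤ r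

/-- A GNFA without ε-transitions: every edge label is nonempty. -/
def NoEps (A : GNFA σ Q) : Prop := ∀ e ∈ A.E, e.2.2 ≠ []

/-- `λ(u)`: the set of strings labeling some edge entering `u`. -/
def lab (A : GNFA σ Q) (u : Q) : Set (List σ) := {ρ | ∃ u', (u', u, ρ) ∈ A.E}

/-- `G_⊣(α)`: states `u` such that some `β ∈ I_u` has `α` as a suffix. -/
def Gsuf (A : GNFA σ Q) (α : List σ) : Set Q := {u | ∃ β, I A u β ∧ α <:+ β}

/-- `G*(α)`: states reached by an edge whose label has `α` as a suffix. -/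
def Gstar (A : GNFA σ Q) (α : List σ) : Set Q := {u | ∃ ρ ∈ A.lab u, α <:+ ρ}

section Colex
variable [LinearOrder σ]

/-- The preorder `u ≼_A v`. -/
def Preceq (A : GNFA σ Q) (u v : Q) : Prop :=
  ∀ α β, I A u α → I A v β →
    ¬((I A u α ∧ I A v α) ∧ (I A u β ∧ I A v β)) → ColexLt α β

/-- `G^≺(α)`: states `u` such that every `β ∈ I_u` satisfies `β ≺ α`. -/
def Gprec (A : GNFA σ Q) (α : List σ) : Set Q := {u | ∀ β, I A u β → ColexLt β α}

/-- `G^≺_⊣(α) = G^≺(α) ∪ G_⊣(α)`. -/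
def GprecSuf (A : GNFA σ Q) (α : List σ) : Set Q := A.Gprec α ∪ A.Gsuf α

/-- The linear order on `Q` is a Wheeler order on `A` (Axioms 1–4). -/
def IsWheeler [LinearOrder Q] (A : GNFA σ Q) : Prop :=
  (∀ u v : Q, u ≤ v → A.Preceq u v) ∧
  (∀ u : Q, A.s ≤ u) ∧
  (∀ u' u v' v : Q, ∀ ρ ρ' : List σ, (u', u, ρ) ∈ A.E → (v', v, ρ') ∈ A.E →
      u < v → ¬IsStrictSuffix ρ' ρ → ColexLe ρ ρ') ∧
  (∀ u' u v' v : Q, ∀ ρ : List σ, (u', u, ρ) ∈ A.E → (v', v, ρ) ∈ A.E →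
      u < v → u' ≤ v')

end Colex

section Indexed
variable [Fintype Q] [LinearOrder Q]

/-- `out(Q[1, m], ρ)`: number of edges labeled `ρ` leaving states in `Q[1, m]`. -/
noncomputable def outC (A : GNFA σ Q) (m : ℕ) (ρ : List σ) : ℕ :=
  {e : Q × Q × List σ | e ∈ A.E ∧ rankQ e.1 ≤ m ∧ e.2.2 = ρ}.ncard

/-- `in(Q[1, m], ρ)`: number of edges labeled `ρ` entering states in `Q[1, m]`. -/
noncomputable def inC (A : GNFA σ Q) (m : ℕ) (ρ : List σ) : ℕ :=
  {e : Q × Q × List σ | e ∈ A.E ∧ rankQ e.2.1 ≤ m ∧ e.2.2 = ρ}.ncard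

/-- `A_max[i]`: the largest `j` such that there is an ε-walk from `Q[j]` to `Q[i]`. -/
noncomputable def Amax (A : GNFA σ Q) (i : ℕ) : ℕ :=
  sSup {j | ∃ u v : Q, rankQ u = i ∧ rankQ v = j ∧ A.EpsWalk v u}

/-- `A_min[i]`: the smallest `j` such that there is an ε-walk from `Q[j]` to `Q[i]`. -/
noncomputable def Amin (A : GNFA σ Q) (i : ℕ) : ℕ :=
  sInf {j | ∃ u v : Q, rankQ u = i ∧ rankQ v = j ∧ A.EpsWalk v u}

variable [LinearOrder σ]

/-- `f_k = out(Q[1, |G^≺(p(α, |α|−k))|], s(α, k))`. -/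
noncomputable def fk (A : GNFA σ Q) (α : List σ) (k : ℕ) : ℕ :=
  A.outC ((A.Gprec (pref α (α.length - k))).ncard) (suff α k)

/-- `g_k = out(Q[1, |G^≺_⊣(p(α, |α|−k))|], s(α, k))`. -/
noncomputable def gk (A : GNFA σ Q) (α : List σ) (k : ℕ) : ℕ :=
  A.outC ((A.GprecSuf (pref α (α.length - k))).ncard) (suff α k)

/-- The property defining `j*` in Lemmas 2 and 4 (largest `j` satisfying it):
(i) `in(Q[1, j], s(α, k)) ≤ f_k` for every `0 < k < min{r+1, |α|}`; and
(ii) `ρ ≺ α` for every `ρ ∈ Σ^k ∩ λ(Q[h])`, every `1 ≤ h ≤ j`, every `0 < k < r+1`. -/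
def Jcond (A : GNFA σ Q) (r : ℕ) (α : List σ) (j : ℕ) : Prop :=
  (∀ k, 0 < k → k < min (r + 1) α.length → A.inC j (suff α k) ≤ A.fk α k) ∧
  (∀ k, 0 < k → k < r + 1 → ∀ h, 1 ≤ h → h ≤ j → ∀ u : Q, rankQ u = h →
      ∀ ρ : List σ, ρ.length = k → ρ ∈ A.lab u → ColexLt ρ α)

/-- The property defining `i*` (largest `i ≤ |Q|` satisfying it):
if `i ≥ 1` then `Q[i] ∈ G*(α)`. -/
def Icond (A : GNFA σ Q) (α : List σ) (i : ℕ) : Prop :=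
  1 ≤ i → ∃ u : Q, rankQ u = i ∧ u ∈ A.Gstar α

/-- The property defining `j°` (smallest `j ≤ |Q|` satisfying it):
`in(Q[1, j], s(α, k)) ≥ g_k` for every `0 < k < min{r+1, |α|}` with `g_k > f_k`. -/
def Jcond2 (A : GNFA σ Q) (r : ℕ) (α : List σ) (j : ℕ) : Prop :=
  ∀ k, 0 < k → k < min (r + 1) α.length → A.fk α k < A.gk α k →
    A.gk α k ≤ A.inC j (suff α k)

end Indexed

end GNFA

section Colex
variable {σ : Type*} [LinearOrder σ]

theorem colexLt_iff_reverse_lt {α β : List σ} : ColexLt α β ↔ α.reverse < β.reverse := Iff.rfl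

theorem ColexLt.trans {α β γ : List σ} (h₁ : ColexLt α β) (h₂ : ColexLt β γ) :
    ColexLt α γ :=
  List.lt_trans h₁ h₂

theorem ColexLt.of_append_append_right {α β ρ : List σ} (h : ColexLt (α ++ ρ) (β ++ ρ)) :
    ColexLt α β := by
  rw [colexLt_iff_reverse_lt, List.reverse_append, List.reverse_append] at h
  by_contra hn
  exact List.append_left_le (l₁ := ρ.reverse) (List.not_lt.mp hn) h

theorem ColexLt.of_isSuffix {α β ρ : List σ} (h : ColexLt α β) (hρ : ρ <:+ α) :
    ColexLt ρ β :=
  List.lt_of_le_of_lt (List.reverse_prefix.mpr hρ).le h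

end Colex

theorem IsLowerSet.mem_iff_rankQ_le_ncard {Q : Type*} [Fintype Q] [LinearOrder Q] {S : Set Q}
    (hS : IsLowerSet S) (u : Q) : u ∈ S ↔ rankQ u ≤ S.ncard := by
  refine ⟨fun hu => Set.ncard_le_ncard (fun v hv => hS hv hu), fun hrank => ?_⟩
  by_contra hu
  have hSu : S ⊆ Set.Iio u := fun v hv => lt_of_not_ge fun huv => hu (hS huv hv)
  have : rankQ u < rankQ u :=
    calc rankQ u ≤ S.ncard := hrank
      _ ≤ (Set.Iio u).ncard := Set.ncard_le_ncard hSu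
      _ < (Set.Iic u).ncard := Set.ncard_lt_ncard Set.Iio_ssubset_Iic_self
  exact lt_irrefl _ this

namespace GNFA

variable {σ Q : Type*}

theorem exists_I_of_reach {A : GNFA σ Q} {u : Q} (h : A.Reach A.s u) : ∃ β, A.I u β := by
  induction h with
  | refl => exact ⟨[], I.base⟩
  | tail _ hstep ih =>
    obtain ⟨β, hβ⟩ := ih
    obtain ⟨ρ, hρ⟩ := hstep
    exact ⟨β ++ ρ, I.step hβ hρ⟩

variable [LinearOrder σ] {A : GNFA σ Q}

theorem Preceq.mem_Gprec {u v : Q} {α : List σ} (huv : A.Preceq u v) (hIv : ∃ γ, A.I v γ)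
    (hv : v ∈ A.Gprec α) : u ∈ A.Gprec α := by
  obtain ⟨γ, hγ⟩ := hIv
  intro β hβ
  by_cases hshared : (A.I u β ∧ A.I v β) ∧ (A.I u γ ∧ A.I v γ)
  · exact hv β hshared.1.2
  · exact (huv β γ hβ hγ hshared).trans (hv γ hγ)

theorem mem_Gprec_of_mem_Gprec_append {u' u : Q} {β ρ : List σ} (he : (u', u, ρ) ∈ A.E)
    (hu : u ∈ A.Gprec (β ++ ρ)) : u' ∈ A.Gprec β :=
  fun _ hγ => (hu _ (I.step hγ he)).of_append_append_right

theorem colexLt_of_mem_lab {u : Q} {α ρ : List σ} (hA : A.Standard) (hu : u ∈ A.Gprec α)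
    (hρ : ρ ∈ A.lab u) : ColexLt ρ α := by
  obtain ⟨u', he⟩ := hρ
  obtain ⟨β, hβ⟩ := exists_I_of_reach (hA.1 u')
  exact (hu _ (I.step hβ he)).of_isSuffix (List.suffix_append β ρ)

variable [LinearOrder Q]

theorem isLowerSet_Gprec (hA : A.Standard) (hW : A.IsWheeler) (α : List σ) :
    IsLowerSet (A.Gprec α) :=
  fun v u huv hv => (hW.1 u v huv).mem_Gprec (exists_I_of_reach (hA.1 v)) hv

variable [Fintype Q]

theorem inC_ncard_Gprec_le_fk (hA : A.Standard) (hW : A.IsWheeler) (α : List σ) (k : ℕ) :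
    A.inC (A.Gprec α).ncard (suff α k) ≤ A.fk α k := by
  refine Set.ncard_le_ncard ?_ (A.E.finite_toSet.subset fun e he => he.1)
  rintro ⟨u', u, ρ⟩ ⟨he, hu, rfl⟩
  refine ⟨he, ?_, rfl⟩
  rw [← (isLowerSet_Gprec hA hW α).mem_iff_rankQ_le_ncard,
    ← List.take_append_drop (α.length - k) α] at hu
  exact ((isLowerSet_Gprec hA hW _).mem_iff_rankQ_le_ncard u').mp
    (mem_Gprec_of_mem_Gprec_append he hu)

theorem jcond_ncard_Gprec (hA : A.Standard) (hW : A.IsWheeler) (r : ℕ) (α : List σ) :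
    A.Jcond r α (A.Gprec α).ncard := by
  refine ⟨fun k _ _ => inC_ncard_Gprec_le_fk hA hW α k, ?_⟩
  rintro k - - h - hh u rfl ρ - hρ
  exact colexLt_of_mem_lab hA (((isLowerSet_Gprec hA hW α).mem_iff_rankQ_le_ncard u).mpr hh) hρ

end GNFA

theorem gprec_card_le_jstar_general {σ Q : Type*} [LinearOrder σ]
    [Fintype Q] [LinearOrder Q] (A : GNFA σ Q)
    (hA : A.Standard) (hW : A.IsWheeler) (r : ℕ) (α : List σ) (jstar : ℕ)
    (hj_max : ∀ j ≤ Fintype.card Q, A.Jcond r α j → j ≤ jstar) :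
    (A.Gprec α).ncard ≤ jstar :=
  hj_max _ (Nat.card_eq_fintype_card (α := Q) ▸ Set.ncard_le_card _)
    (GNFA.jcond_ncard_Gprec hA hW r α)

/-- Let `A` be a Wheeler `r`-GNFA with Wheeler order `≤` and
`α ≠ ε`. With `f_k = out(Q[1, |G^≺(p(α,|α|−k))|], s(α,k))`, let `j*` be the
largest `0 ≤ j ≤ |Q|` such that (i) `in(Q[1,j], s(α,k)) ≤ f_k` for every
`0 < k < min{r+1,|α|}` and (ii) `ρ ≺ α` for every `ρ ∈ Σ^k ∩ λ(Q[h])`, every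
`1 ≤ h ≤ j`, every `0 < k < r+1`. Then `|G^≺(α)| ≤ j*`. -/
theorem gprec_card_le_jstar {σ Q : Type*} [Fintype σ] [LinearOrder σ]
    [Fintype Q] [LinearOrder Q] (A : GNFA σ Q)
    (hA : A.Standard) (hW : A.IsWheeler) (r : ℕ) (hr : A.Bounded r)
    (α : List σ) (hα : α ≠ [])
    (jstar : ℕ) (hj_le : jstar ≤ Fintype.card Q) (hj : A.Jcond r α jstar)
    (hj_max : ∀ j ≤ Fintype.card Q, A.Jcond r α j → j ≤ jstar) :
    (A.Gprec α).ncard ≤ jstar :=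
  gprec_card_le_jstar_general A hA hW r α jstar hj_max
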